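/- arXiv:1711.02303 — 5 statements merged into one kernel-verified Lean document; each statement's English description precedes it below -/
import Mathlib

section
/- Let m, n ≥ 1. Then (the number of (n−1)-element subsets of an (m+n)-element set) divided by ((the number of n-element subsets of an (m+1+n)-element set) minus 1) equals n / (m + 1 + n − (m+1)/C(m+n, n)), i.e., C(m+n, n−1) / (C(m+1+n, n) − 1) = n / (m + 1 + n − (m+1)/C(m+n, n)). -/
/-- Binomial identity: `C(m+n, n−1) / (C(m+1+n, n) − 1) = n / (m+1+n − (m+1)/C(m+n, n))`. -/
theorem stmt_9 (m n : ℕ) (hm : 1 ≤ m) (hn : 1 ≤ n) :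
    ((m + n).choose (n - 1) : ℝ) / (((m + 1 + n).choose n : ℝ) - 1) =
      (n : ℝ) / ((m : ℝ) + 1 + n - ((m : ℝ) + 1) / ((m + n).choose n : ℝ)) := by
  -- identity 1: C(m+n, n) * n = C(m+n, n-1) * (m+1)
  have h1 : (m + n).choose n * n = (m + n).choose (n - 1) * (m + 1) := by
    have := Nat.choose_succ_right_eq (m + n) (n - 1)
    have hn' : n - 1 + 1 = n := Nat.succ_pred_eq_of_pos hn
    rw [hn'] at this
    rw [this]
    congr 1
    omega
  -- identity 2: (m+n+1) * C(m+n, n) = C(m+1+n, n) * (m+1)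
  have h2 : (m + n + 1) * (m + n).choose n = (m + 1 + n).choose n * (m + 1) := by
    have key := Nat.add_one_mul_choose_eq (m + n) m
    have hs : (m + 1 + n).choose n = (m + n).succ.choose m.succ := by
      rw [← Nat.choose_symm (by omega : n ≤ m + 1 + n)]
      congr 1 <;> omega
    have hmn : (m + n).choose m = (m + n).choose n := by
      rw [← Nat.choose_symm (Nat.le_add_right m n)]
      congr 1
      omega
    rw [hs, ← key, hmn]
  -- positivity facts
  have hC : (0 : ℝ) < ((m + n).choose n : ℝ) := by
    exact_mod_cast Nat.choose_pos (by omega : n ≤ m + n)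
  have hB2 : 2 ≤ (m + 1 + n).choose n := by
    have h := Nat.choose_le_choose n (by omega : n + 1 ≤ m + 1 + n)
    rw [Nat.choose_succ_self_right] at h
    omega
  have h1R : ((m + n).choose n : ℝ) * n = ((m + n).choose (n - 1) : ℝ) * (m + 1) := by
    exact_mod_cast h1
  have h2R : ((m : ℝ) + n + 1) * ((m + n).choose n : ℝ)
      = ((m + 1 + n).choose n : ℝ) * (m + 1) := by exact_mod_cast h2
  have hB : (1 : ℝ) < ((m + 1 + n).choose n : ℝ) := by exact_mod_cast hB2
  have hCne : ((m + n).choose n : ℝ) ≠ 0 := ne_of_gt hC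
  have hD : 0 < (m : ℝ) + 1 + n - ((m : ℝ) + 1) / ((m + n).choose n : ℝ) := by
    rw [sub_pos, div_lt_iff₀ hC]
    nlinarith [hB, h2R]
  have hBne : ((m + 1 + n).choose n : ℝ) - 1 ≠ 0 := by linarith
  rw [div_eq_div_iff hBne (ne_of_gt hD)]
  field_simp
  linear_combination (((m + n).choose (n - 1) : ℝ)) * h2R + (1 - ((m + 1 + n).choose n : ℝ)) * h1R
end

section
/- Fix n ≥ 1 and consider the function p(m) = n / (m + 1 + n − (m+1)/C(m+n, n)) for positive integers m. Then p(m) is strictly decreasing in m, and p(m) → 0 as m → ∞. -/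
/-!
Write `p m = n / D m` with `D m = m + 1 + n - (m + 1) / C(m + n, n)` (`changeProbDenom n m`).
For `n ≥ 1` we have `C(m + n, n) ≥ m + 1`, so the subtracted fraction lies in `(0, 1]`. Hence
`D m ≥ m + 1`, which gives `p m → 0`, and
`D (m + 1) - D m = 1 - (m + 2) / C(m + 1 + n, n) + (m + 1) / C(m + n, n) > 0`,
which gives strict monotonicity.
-/

open Filter

theorem Nat.succ_le_choose_add (m : ℕ) {n : ℕ} (hn : 1 ≤ n) : m + 1 ≤ (m + n).choose n := by
  calc m + 1 = (m + 1).choose m := (Nat.choose_succ_self_right m).symm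
    _ ≤ (m + n).choose m := Nat.choose_le_choose m (by omega)
    _ = (m + n).choose n := Nat.choose_symm_add

noncomputable def changeProbDenom (n m : ℕ) : ℝ :=
  (m : ℝ) + 1 + n - ((m : ℝ) + 1) / ((m + n).choose n : ℝ)

section

variable {n : ℕ}

theorem succ_div_choose_le_one (hn : 1 ≤ n) (m : ℕ) :
    ((m : ℝ) + 1) / ((m + n).choose n : ℝ) ≤ 1 := by
  have hle : (m : ℝ) + 1 ≤ ((m + n).choose n : ℝ) := by
    exact_mod_cast Nat.succ_le_choose_add m hn
  exact div_le_one_of_le₀ hle (by positivity)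

theorem succ_le_changeProbDenom (hn : 1 ≤ n) (m : ℕ) : (m : ℝ) + 1 ≤ changeProbDenom n m := by
  have hn' : (1 : ℝ) ≤ n := by exact_mod_cast hn
  unfold changeProbDenom
  linarith [succ_div_choose_le_one hn m]

theorem changeProbDenom_pos (hn : 1 ≤ n) (m : ℕ) : 0 < changeProbDenom n m :=
  lt_of_lt_of_le (by positivity) (succ_le_changeProbDenom hn m)

theorem changeProbDenom_lt_succ (hn : 1 ≤ n) (m : ℕ) :
    changeProbDenom n m < changeProbDenom n (m + 1) := by
  have hnext := succ_div_choose_le_one hn (m + 1)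
  have hpos : 0 < ((m : ℝ) + 1) / ((m + n).choose n : ℝ) := by
    have : 0 < (m + n).choose n := Nat.choose_pos (by omega)
    positivity
  unfold changeProbDenom
  push_cast at hnext ⊢
  linarith

theorem strictMono_changeProbDenom (hn : 1 ≤ n) : StrictMono (changeProbDenom n) :=
  strictMono_nat_of_lt_succ (changeProbDenom_lt_succ hn)

theorem tendsto_changeProbDenom_atTop (hn : 1 ≤ n) :
    Tendsto (changeProbDenom n) atTop atTop :=
  tendsto_atTop_mono (succ_le_changeProbDenom hn)
    (tendsto_atTop_add_const_right _ _ tendsto_natCast_atTop_atTop)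

end

/-- The probability `p(m) = n / (m + 1 + n − (m+1)/C(m+n, n))` of having to recompute
the security strategy is strictly decreasing in `m` and tends to `0` as `m → ∞`. -/
theorem stmt_10 (n : ℕ) (hn : 1 ≤ n)
    (p : ℕ → ℝ)
    (hp : ∀ m, p m = (n : ℝ) / ((m : ℝ) + 1 + n - ((m : ℝ) + 1) / ((m + n).choose n : ℝ))) :
    (∀ m₁ m₂ : ℕ, 1 ≤ m₁ → m₁ < m₂ → p m₂ < p m₁) ∧
      Filter.Tendsto p Filter.atTop (nhds 0) := by
  obtain rfl : p = fun m => (n : ℝ) / changeProbDenom n m := funext hp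
  refine ⟨fun m₁ m₂ _ hlt => ?_, tendsto_const_nhds.div_atTop (tendsto_changeProbDenom_atTop hn)⟩
  exact div_lt_div_of_pos_left (by exact_mod_cast hn) (changeProbDenom_pos hn m₁)
    (strictMono_changeProbDenom hn hlt)
end

section
/- Let x̄* ∈ Δ_n be the unique security strategy for payoff matrix G ∈ ℝ^{n×m} with value V, and let g ∈ ℝ^n be a new column with gᵀx̄* < V. Then every security strategy x̄⁺ for G_new = [G g] satisfies gᵀx̄⁺ = V_new, where V_new is the value of the new game. -/
/-!
Let `F` be the value function of the old game and `gᵀx` the payoff of the new column, so the new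
value function is `min F (gᵀx)`. If `gᵀx⁺` were strictly above the new value, then near `x⁺` only
`F` would matter; since `F x⁺ < V = F x*`, moving `x⁺` slightly towards `x*` raises `F` by
concavity while `gᵀx` stays above the old level, contradicting the optimality of `x⁺`.
-/

open Matrix Filter Topology

theorem Fin.ciInf_eq_min_castSucc_last {α : Type*} [ConditionallyCompleteLinearOrder α] {m : ℕ}
    [Nonempty (Fin m)] (f : Fin (m + 1) → α) :
    ⨅ j, f j = min (⨅ j : Fin m, f j.castSucc) (f (Fin.last m)) := by
  have hbdd : BddBelow (Set.range f) := (Set.finite_range f).bddBelow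
  refine le_antisymm (le_min (le_ciInf fun j => ciInf_le hbdd _) (ciInf_le hbdd _)) ?_
  refine le_ciInf fun j => ?_
  induction j using Fin.lastCases with
  | last => exact min_le_right _ _
  | cast j => exact (min_le_left _ _).trans (ciInf_le (Set.finite_range _).bddBelow j)

section Concave

variable {E : Type*} [AddCommGroup E] [Module ℝ E] {s : Set E}

theorem concaveOn_ciInf {ι : Type*} [Finite ι] [Nonempty ι] {f : ι → E → ℝ}
    (hf : ∀ i, ConcaveOn ℝ s (f i)) : ConcaveOn ℝ s (fun x => ⨅ i, f i x) := by
  refine ⟨(hf (Classical.arbitrary ι)).1, fun x hx y hy a b ha hb hab => le_ciInf fun i => ?_⟩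
  calc a • (⨅ i, f i x) + b • (⨅ i, f i y)
      ≤ a • f i x + b • f i y :=
        add_le_add (smul_le_smul_of_nonneg_left (ciInf_le (Set.finite_range _).bddBelow i) ha)
          (smul_le_smul_of_nonneg_left (ciInf_le (Set.finite_range _).bddBelow i) hb)
    _ ≤ f i (a • x + b • y) := (hf i).2 hx hy ha hb hab

theorem ConcaveOn.le_of_isMaxOn_min {f h : E → ℝ} (hf : ConcaveOn ℝ s f) (hh : ConcaveOn ℝ s h)
    {x y : E} (hx : x ∈ s) (hy : y ∈ s) (hmax : IsMaxOn (fun z => min (f z) (h z)) s x)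
    (hxy : f x < f y) : h x ≤ f x := by
  by_contra! hfh
  have hcont : Tendsto (fun t : ℝ => (1 - t) * h x + t * h y) (𝓝 0) (𝓝 (h x)) := by
    simpa using (by fun_prop : Continuous fun t : ℝ => (1 - t) * h x + t * h y).tendsto 0
  obtain ⟨t, hth, ht⟩ := (((hcont.eventually (lt_mem_nhds hfh)).filter_mono nhdsWithin_le_nhds).and
    (Ioo_mem_nhdsGT zero_lt_one)).exists
  have h1t : 0 ≤ 1 - t := by linarith [ht.2]
  have hz : (1 - t) • x + t • y ∈ s := hf.1 hx hy h1t ht.1.le (by ring)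
  have hfz : f x < f ((1 - t) • x + t • y) :=
    calc f x < (1 - t) • f x + t • f y := by simp only [smul_eq_mul]; nlinarith [ht.1]
      _ ≤ _ := hf.2 hx hy h1t ht.1.le (by ring)
  have hhz : f x < h ((1 - t) • x + t • y) := hth.trans_le (hh.2 hx hy h1t ht.1.le (by ring))
  exact (lt_min hfz hhz).not_ge ((hmax hz).trans (min_le_left _ _))

end Concave

theorem stmt_15_general {n m : ℕ} (hm : 0 < m)
    (G : Matrix (Fin n) (Fin m) ℝ) (g : Fin n → ℝ)
    (Gnew : Matrix (Fin n) (Fin (m + 1)) ℝ)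
    (hGnew : ∀ i, (∀ j : Fin m, Gnew i j.castSucc = G i j) ∧ Gnew i (Fin.last m) = g i)
    (xstar : Fin n → ℝ) (hxstar : xstar ∈ stdSimplex ℝ (Fin n))
    (V : ℝ) (hV : V = ⨅ j : Fin m, ∑ i, xstar i * G i j)
    (huniq : ∀ x ∈ stdSimplex ℝ (Fin n), x ≠ xstar →
      (⨅ j : Fin m, ∑ i, x i * G i j) < V)
    (hcut : ∑ i, xstar i * g i < V)
    (Vnew : ℝ)
    (hVnew : Vnew = ⨆ x : stdSimplex ℝ (Fin n),
      ⨅ j : Fin (m + 1), ∑ i, (x : Fin n → ℝ) i * Gnew i j) :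
    ∀ xplus ∈ stdSimplex ℝ (Fin n),
      (∀ x ∈ stdSimplex ℝ (Fin n),
        (⨅ j : Fin (m + 1), ∑ i, x i * Gnew i j) ≤
          ⨅ j : Fin (m + 1), ∑ i, xplus i * Gnew i j) →
      ∑ i, xplus i * g i = Vnew := by
  intro xplus hxplus hopt
  have : Nonempty (Fin m) := Fin.pos_iff_nonempty.mp hm
  set F : (Fin n → ℝ) → ℝ := fun x => ⨅ j : Fin m, ∑ i, x i * G i j
  have hsplit (x : Fin n → ℝ) :
      ⨅ j : Fin (m + 1), ∑ i, x i * Gnew i j = min (F x) (∑ i, x i * g i) := by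
    simp only [Fin.ciInf_eq_min_castSucc_last, hGnew, F]
  have hVnew' : Vnew = min (F xplus) (∑ i, xplus i * g i) := by
    have : Nonempty (stdSimplex ℝ (Fin n)) := ⟨⟨xplus, hxplus⟩⟩
    rw [hVnew, ← hsplit]
    exact ciSup_eq_of_forall_le_of_forall_lt_exists_gt (fun x => hopt x x.2)
      fun w hw => ⟨⟨xplus, hxplus⟩, hw⟩
  have hFconc : ConcaveOn ℝ (stdSimplex ℝ (Fin n)) F := concaveOn_ciInf fun j =>
    ((LinearMap.proj j).comp G.vecMulLinear).concaveOn (convex_stdSimplex ℝ _)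
  have hgconc : ConcaveOn ℝ (stdSimplex ℝ (Fin n)) (fun x => ∑ i, x i * g i) :=
    (dotProductBilin ℝ ℝ |>.flip g).concaveOn (convex_stdSimplex ℝ _)
  refine le_antisymm ?_ (hVnew' ▸ min_le_right _ _)
  by_contra! hlt
  rw [hVnew', min_lt_iff] at hlt
  obtain hlt | hlt := hlt
  · have hbetter : F xplus < F xstar := by
      rw [show F xstar = V from hV.symm]
      by_cases hx : xplus = xstar
      · subst hx
        exact hlt.trans hcut
      · exact huniq xplus hxplus hx
    have hmax : IsMaxOn (fun x => min (F x) (∑ i, x i * g i)) (stdSimplex ℝ (Fin n)) xplus :=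
      isMaxOn_iff.2 fun x hx => by simpa only [hsplit] using hopt x hx
    exact hlt.not_ge (hFconc.le_of_isMaxOn_min hgconc hxplus hxstar hmax hbetter)
  · exact hlt.false

/-- If `x̄*` is the unique security strategy for `G` with value `V`, and the new column
`g` satisfies `gᵀx̄* < V`, then every security strategy `x̄⁺` of the new game `[G g]`
satisfies `gᵀx̄⁺ = V_new`. -/
theorem stmt_15 {n m : ℕ} (hn : 0 < n) (hm : 0 < m)
    (G : Matrix (Fin n) (Fin m) ℝ) (g : Fin n → ℝ)
    (Gnew : Matrix (Fin n) (Fin (m + 1)) ℝ)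
    (hGnew : ∀ i, (∀ j : Fin m, Gnew i j.castSucc = G i j) ∧ Gnew i (Fin.last m) = g i)
    (xstar : Fin n → ℝ) (hxstar : xstar ∈ stdSimplex ℝ (Fin n))
    (V : ℝ) (hV : V = ⨅ j : Fin m, ∑ i, xstar i * G i j)
    (huniq : ∀ x ∈ stdSimplex ℝ (Fin n), x ≠ xstar →
      (⨅ j : Fin m, ∑ i, x i * G i j) < V)
    (hcut : ∑ i, xstar i * g i < V)
    (Vnew : ℝ)
    (hVnew : Vnew = ⨆ x : stdSimplex ℝ (Fin n),
      ⨅ j : Fin (m + 1), ∑ i, (x : Fin n → ℝ) i * Gnew i j) :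
    ∀ xplus ∈ stdSimplex ℝ (Fin n),
      (∀ x ∈ stdSimplex ℝ (Fin n),
        (⨅ j : Fin (m + 1), ∑ i, x i * Gnew i j) ≤
          ⨅ j : Fin (m + 1), ∑ i, xplus i * Gnew i j) →
      ∑ i, xplus i * g i = Vnew :=
  stmt_15_general hm G g Gnew hGnew xstar hxstar V hV huniq hcut Vnew hVnew
end

section
/- Let x₀ be a vertex of X = {x : Ax ≤ b} with exactly n active constraints indexed by Ω₀ whose rows are linearly independent, and let u = Σ_{i∈Ω₀} ρ_i A_iᵀ with all ρ_i > 0. If u and c are linearly independent, then x₀ is the unique maximizer of uᵀx over X, and consequently x₀ is a shadow vertex with respect to span(u,c). -/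
open Matrix

/-- If `x₀` is a vertex of `X = {x : Ax ≤ b}` with exactly `n` active, linearly
independent constraint rows indexed by `Ω₀`, and `u` is a strictly positive combination
of those rows with `u, c` linearly independent, then `x₀` is the unique maximizer of
`uᵀx` over `X`, and its projection onto `span(u,c)` is a vertex (extreme point) of the
shadow of `X`, i.e. `x₀` is a shadow vertex. -/
theorem stmt_17 {m n : ℕ} (A : Matrix (Fin m) (Fin n) ℝ) (b : Fin m → ℝ)
    (X : Set (Fin n → ℝ)) (hX : X = {x | ∀ i, A i ⬝ᵥ x ≤ b i})
    (x₀ : Fin n → ℝ) (hx₀ : x₀ ∈ X)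
    (Ω₀ : Finset (Fin m)) (hcard : Ω₀.card = n)
    (hindep : LinearIndependent ℝ (fun i : Ω₀ => A i))
    (hactive : ∀ i ∈ Ω₀, A i ⬝ᵥ x₀ = b i)
    (ρ : Fin m → ℝ) (hρ : ∀ i ∈ Ω₀, 0 < ρ i)
    (u c : Fin n → ℝ) (hu : u = ∑ i ∈ Ω₀, ρ i • A i)
    (huc : LinearIndependent ℝ ![u, c])
    (Γ : (Fin n → ℝ) → (Fin n → ℝ))
    (hΓmem : ∀ x, Γ x ∈ Submodule.span ℝ ({u, c} : Set (Fin n → ℝ)))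
    (hΓorth : ∀ x, ∀ v ∈ Submodule.span ℝ ({u, c} : Set (Fin n → ℝ)),
      (x - Γ x) ⬝ᵥ v = 0) :
    (∀ x ∈ X, x ≠ x₀ → u ⬝ᵥ x < u ⬝ᵥ x₀) ∧
      Γ x₀ ∈ Set.extremePoints ℝ (Γ '' X) := by
  subst hX
  -- `u ⬝ᵥ x` as a sum
  have hudot : ∀ x : Fin n → ℝ, u ⬝ᵥ x = ∑ i ∈ Ω₀, ρ i * (A i ⬝ᵥ x) := by
    intro x
    subst hu
    simp only [dotProduct, Finset.sum_apply, Pi.smul_apply, smul_eq_mul, Finset.sum_mul,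
      Finset.mul_sum]
    rw [Finset.sum_comm]
    exact Finset.sum_congr rfl fun i _ => Finset.sum_congr rfl fun j _ => by ring
  -- Part 1: unique maximizer
  have key : ∀ x ∈ {x | ∀ i, A i ⬝ᵥ x ≤ b i}, x ≠ x₀ → u ⬝ᵥ x < u ⬝ᵥ x₀ := by
    intro x hx hne
    rw [hudot, hudot]
    have hle : ∀ i ∈ Ω₀, ρ i * (A i ⬝ᵥ x) ≤ ρ i * (A i ⬝ᵥ x₀) := fun i hi => by
      rw [hactive i hi]
      exact mul_le_mul_of_nonneg_left (hx i) (hρ i hi).le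
    -- there must be a strict constraint
    by_cases hstrict : ∃ i ∈ Ω₀, A i ⬝ᵥ x < A i ⬝ᵥ x₀
    · obtain ⟨j, hj, hjs⟩ := hstrict
      exact Finset.sum_lt_sum hle ⟨j, hj, mul_lt_mul_of_pos_left hjs (hρ j hj)⟩
    · exfalso
      push_neg at hstrict
      have heq : ∀ i ∈ Ω₀, A i ⬝ᵥ (x - x₀) = 0 := fun i hi => by
        have h1 := hx i
        rw [← hactive i hi] at h1
        have := hstrict i hi
        have : A i ⬝ᵥ x = A i ⬝ᵥ x₀ := le_antisymm h1 this
        rw [dotProduct_sub, this, sub_self]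
      have hspan : Submodule.span ℝ (Set.range (fun i : Ω₀ => A i)) = ⊤ := by
        apply hindep.span_eq_top_of_card_eq_finrank'
        rw [Fintype.card_coe, hcard, Module.finrank_fin_fun]
      have hzero : ∀ w ∈ Submodule.span ℝ (Set.range (fun i : Ω₀ => A i)),
          w ⬝ᵥ (x - x₀) = 0 := by
        intro w hw
        induction hw using Submodule.span_induction with
        | mem w hw => obtain ⟨⟨i, hi⟩, rfl⟩ := hw; exact heq i hi
        | zero => simp
        | add w₁ w₂ _ _ h1 h2 => rw [add_dotProduct, h1, h2, add_zero]
        | smul a w _ h => rw [smul_dotProduct, h, smul_zero]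
      have : (x - x₀) ⬝ᵥ (x - x₀) = 0 := hzero _ (hspan ▸ Submodule.mem_top)
      exact hne (sub_eq_zero.mp (dotProduct_self_eq_zero.mp this))
  refine ⟨key, ?_⟩
  -- u ⬝ᵥ Γ x = u ⬝ᵥ x
  have hu_mem : u ∈ Submodule.span ℝ ({u, c} : Set (Fin n → ℝ)) :=
    Submodule.subset_span (Set.mem_insert _ _)
  have hΓu : ∀ x, u ⬝ᵥ Γ x = u ⬝ᵥ x := by
    intro x
    have := hΓorth x u hu_mem
    rw [sub_dotProduct, sub_eq_zero] at this
    rw [dotProduct_comm, ← this, dotProduct_comm]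
  rw [mem_extremePoints]
  refine ⟨⟨x₀, hx₀, rfl⟩, ?_⟩
  rintro _ ⟨y₁, hy₁, rfl⟩ _ ⟨y₂, hy₂, rfl⟩ hseg
  obtain ⟨a, bb, ha, hb, hab, habeq⟩ := hseg
  have hmax : ∀ y ∈ {x | ∀ i, A i ⬝ᵥ x ≤ b i}, u ⬝ᵥ y ≤ u ⬝ᵥ x₀ := by
    intro y hy
    by_cases h : y = x₀
    · rw [h]
    · exact (key y hy h).le
  have hdot : a * (u ⬝ᵥ y₁) + bb * (u ⬝ᵥ y₂) = u ⬝ᵥ x₀ := by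
    have := congrArg (fun w => u ⬝ᵥ w) habeq
    simpa [dotProduct_add, dotProduct_smul, smul_eq_mul, hΓu] using this
  have h1 : y₁ = x₀ := by
    by_contra h
    have hlt := key y₁ hy₁ h
    have : a * (u ⬝ᵥ y₁) + bb * (u ⬝ᵥ y₂) < a * (u ⬝ᵥ x₀) + bb * (u ⬝ᵥ x₀) :=
      add_lt_add_of_lt_of_le (mul_lt_mul_of_pos_left hlt ha)
        (mul_le_mul_of_nonneg_left (hmax y₂ hy₂) hb.le)
    rw [hdot, ← add_mul, hab, one_mul] at this
    exact lt_irrefl _ this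
  have h2 : y₂ = x₀ := by
    by_contra h
    have hlt := key y₂ hy₂ h
    have : a * (u ⬝ᵥ y₁) + bb * (u ⬝ᵥ y₂) < a * (u ⬝ᵥ x₀) + bb * (u ⬝ᵥ x₀) :=
      add_lt_add_of_le_of_lt (mul_le_mul_of_nonneg_left (hmax y₁ hy₁) ha.le)
        (mul_lt_mul_of_pos_left hlt hb)
    rw [hdot, ← add_mul, hab, one_mul] at this
    exact lt_irrefl _ this
  rw [h1, h2]
  exact ⟨rfl, rfl⟩
end

section
/- In the pivot step of the shadow vertex method with active set Ω_t of size n whose rows {A_i}_{i∈Ω_t} are linearly independent, suppose A_k (k = Ω_t^κ) is removed, and every other constraint row A_i (i ∉ Ω_t) has nonnegative coefficient γ_{iκ} ≥ 0 in its expansion A_i = Σ_j γ_{ij} A_{Ω_t^j}, while the objective c has negative coefficient α_κ < 0 in its expansion c = Σ_j α_j A_{Ω_t^j}. Then c does not lie in the convex cone generated by {A_1ᵀ, …, A_{m+n}ᵀ}. -/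
open Matrix

/-!
Expand everything in the basis formed by the active rows. The `κ`-th coordinate functional is
nonnegative on every constraint row — on the active rows it takes the values `0` and `1`, on the
others it is `γ i κ` — hence on every nonnegative combination of them, while it is `α κ < 0` on `c`.
Its kernel is the separating hyperplane.
-/

theorem not_exists_nonneg_combination_of_linearMap_neg {R M ι : Type*} [Semiring R]
    [PartialOrder R] [IsOrderedRing R] [AddCommMonoid M] [Module R M] [Fintype ι]
    (f : M →ₗ[R] R) {v : ι → M} (hv : ∀ i, 0 ≤ f (v i)) {c : M} (hc : f c < 0) :
    ¬ ∃ lam : ι → R, (∀ i, 0 ≤ lam i) ∧ c = ∑ i, lam i • v i := by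
  rintro ⟨lam, hlam, rfl⟩
  refine hc.not_ge ?_
  simp only [map_sum, map_smul, smul_eq_mul]
  exact Finset.sum_nonneg fun i _ => mul_nonneg (hlam i) (hv i)

theorem Module.Basis.coord_self_nonneg {R M ι : Type*} [Semiring R] [PartialOrder R]
    [IsOrderedRing R] [AddCommMonoid M] [Module R M] (b : Module.Basis ι R M) (k j : ι) :
    0 ≤ b.coord k (b j) := by
  classical
  rw [Module.Basis.coord_apply, b.repr_self_apply]
  split_ifs <;> simp

theorem stmt_18_general {m n : ℕ} (A : Fin (m + n) → (Fin n → ℝ))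
    (σ : Fin n → Fin (m + n))
    (B : Fin n → (Fin n → ℝ)) (hB : ∀ j, B j = A (σ j))
    (hBindep : LinearIndependent ℝ B)
    (γ : Fin (m + n) → Fin n → ℝ)
    (hγ : ∀ i, A i = ∑ j, γ i j • B j)
    (c : Fin n → ℝ) (α : Fin n → ℝ) (hc : c = ∑ j, α j • B j)
    (κ : Fin n)
    (hnonneg : ∀ i, (∀ j, i ≠ σ j) → 0 ≤ γ i κ)
    (hneg : α κ < 0) :
    ¬ ∃ lam : Fin (m + n) → ℝ, (∀ i, 0 ≤ lam i) ∧ c = ∑ i, lam i • A i := by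
  classical
  let b := basisOfPiSpaceOfLinearIndependent hBindep
  have hb : ⇑b = B := coe_basisOfPiSpaceOfLinearIndependent hBindep
  have coord_expansion (a : Fin n → ℝ) : b.coord κ (∑ j, a j • B j) = a κ := by
    rw [← hb, Module.Basis.coord_apply, b.repr_sum_self]
  refine not_exists_nonneg_combination_of_linearMap_neg (b.coord κ) (fun i => ?_) ?_
  · by_cases hactive : ∃ j, i = σ j
    · obtain ⟨j, rfl⟩ := hactive
      rw [← hB j, ← hb]
      exact b.coord_self_nonneg κ j
    · rw [hγ i, coord_expansion]
      exact hnonneg i (not_exists.mp hactive)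
  · rwa [hc, coord_expansion]

/-- Infeasibility detection in the pivot step: if, in the expansion over the linearly
independent active rows `B j = A (σ j)`, every row outside the active set has a
nonnegative `κ`-coefficient while the objective `c` has a negative `κ`-coefficient,
then `c` does not lie in the convex cone generated by all constraint rows. -/
theorem stmt_18 {m n : ℕ} (A : Fin (m + n) → (Fin n → ℝ))
    (σ : Fin n → Fin (m + n)) (hσ : Function.Injective σ)
    (B : Fin n → (Fin n → ℝ)) (hB : ∀ j, B j = A (σ j))
    (hBindep : LinearIndependent ℝ B)
    (γ : Fin (m + n) → Fin n → ℝ)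
    (hγ : ∀ i, A i = ∑ j, γ i j • B j)
    (c : Fin n → ℝ) (α : Fin n → ℝ) (hc : c = ∑ j, α j • B j)
    (κ : Fin n)
    (hnonneg : ∀ i, (∀ j, i ≠ σ j) → 0 ≤ γ i κ)
    (hneg : α κ < 0) :
    ¬ ∃ lam : Fin (m + n) → ℝ, (∀ i, 0 ≤ lam i) ∧ c = ∑ i, lam i • A i :=
  stmt_18_general A σ B hB hBindep γ hγ c α hc κ hnonneg hneg
end
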